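/- Let N be a quantum channel on d×d complex matrices, γ a positive-definite density matrix with N(γ) positive definite, and ρ a density matrix with ρ and N(ρ) positive definite. With eigenbases, quasi-probability P^{μ,ν}_{ij,k'l'}, and complex entropy production σ(μ,i,j,ν,k',l') as above, the first moment of the entropy production under the two-point-measurement quasi-probability equals the quantum relative entropy difference: ∑_{μ,ν,i,j,k',l'} P^{μ,ν}_{ij,k'l'} · σ(μ,i,j,ν,k',l') = S(ρ‖γ) − S(N(ρ)‖N(γ)); in particular the mean imaginary entropy production vanishes, ∑ P^{μ,ν}_{ij,k'l'} · σ_I(μ,i,j,ν,k',l') = 0. -/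

import Mathlib

open Matrix
open scoped ComplexOrder

/-- ⟨v|A|w⟩ -/
noncomputable def braket {d : ℕ} (v : Fin d → ℂ) (A : Matrix (Fin d) (Fin d) ℂ)
    (w : Fin d → ℂ) : ℂ :=
  dotProduct (star v) (A.mulVec w)

/-- |v⟩⟨w| -/
noncomputable def ketbra {d : ℕ} (v w : Fin d → ℂ) : Matrix (Fin d) (Fin d) ℂ :=
  Matrix.vecMulVec v (star w)

/-- A quantum channel in Kraus form: N(X) = ∑ m, K m * X * (K m)ᴴ. -/
noncomputable def krausMap {d : ℕ} {ι : Type} [Fintype ι] (K : ι → Matrix (Fin d) (Fin d) ℂ)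
    (X : Matrix (Fin d) (Fin d) ℂ) : Matrix (Fin d) (Fin d) ℂ :=
  ∑ m, K m * X * (K m)ᴴ

/-- The adjoint map: N†(X) = ∑ m, (K m)ᴴ * X * K m. -/
noncomputable def krausAdj {d : ℕ} {ι : Type} [Fintype ι] (K : ι → Matrix (Fin d) (Fin d) ℂ)
    (X : Matrix (Fin d) (Fin d) ℂ) : Matrix (Fin d) (Fin d) ℂ :=
  ∑ m, (K m)ᴴ * X * K m

/-- An orthonormal family of vectors in ℂ^d. -/
def IsONB {d : ℕ} (e : Fin d → Fin d → ℂ) : Prop :=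
  ∀ i j, dotProduct (star (e i)) (e j) = if i = j then 1 else 0

/-- For A = ∑ i, r i • |e i⟩⟨e i| with `e` orthonormal and `r` positive, the complex
matrix power A^z = exp (z log A) is given by A^z = ∑ i, (r i)^z • |e i⟩⟨e i|. -/
noncomputable def projPow {d : ℕ} (r : Fin d → ℝ) (e : Fin d → Fin d → ℂ) (z : ℂ) :
    Matrix (Fin d) (Fin d) ℂ :=
  ∑ i, ((r i : ℂ) ^ z) • ketbra (e i) (e i)

/-- The two-point-measurement quasi-probability
P^{μ,ν}_{ij,k'l'} = p_μ ⟨φ'_ν| Π_{k'} N(Π_i |ψ_μ⟩⟨ψ_μ| Π_j) Π_{l'} |φ'_ν⟩. -/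
noncomputable def tpmP {d : ℕ} {ι : Type} [Fintype ι] (K : ι → Matrix (Fin d) (Fin d) ℂ)
    (p : Fin d → ℝ) (ψ : Fin d → Fin d → ℂ) (φ : Fin d → Fin d → ℂ)
    (e : Fin d → Fin d → ℂ) (f : Fin d → Fin d → ℂ)
    (μ ν i j k l : Fin d) : ℂ :=
  (p μ : ℂ) *
    braket (φ ν)
      (ketbra (f k) (f k) *
        krausMap K (ketbra (e i) (e i) * ketbra (ψ μ) (ψ μ) * ketbra (e j) (e j)) *
        ketbra (f l) (f l))
      (φ ν)

/-- For A = ∑ i, r i • |e i⟩⟨e i| with `e` orthonormal and `r` positive, the matrix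
logarithm is log A = ∑ i, log (r i) • |e i⟩⟨e i| (spectral decomposition). -/
noncomputable def projLog {d : ℕ} (r : Fin d → ℝ) (e : Fin d → Fin d → ℂ) :
    Matrix (Fin d) (Fin d) ℂ :=
  ∑ i, ((Real.log (r i) : ℂ)) • ketbra (e i) (e i)

/-- The complex forward entropy production σ(μ,i,j,ν,k',l'). -/
noncomputable def entProdFwd {d : ℕ} (p p' r r' : Fin d → ℝ) (μ ν i j k l : Fin d) : ℂ :=
  (((Real.log (p μ) - Real.log (p' ν)) -
      1/2 * Real.log (r i * r j / (r' k * r' l)) : ℝ) : ℂ) -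
    Complex.I / 2 * ((Real.log (r i / r j) - Real.log (r' k / r' l) : ℝ) : ℂ)

/-!
Every term of the entropy production depends on a single index, and the quasi-probability is
multilinear in the six projector families. Weighting `P` by a product of single-index functions
therefore collapses the six sums into one trace `Tr[A N(Y ρ_w Z) B X]`, where each capital letter
is the spectral sum of a weight; completeness of the bases and trace preservation then identify
the mean of each term, e.g. `Tr[log γ ρ]` for the `i`-term and `Tr[ρ log γ]` for the `j`-term.
The imaginary coefficients `±i/2` of these two means cancel by cyclicity of the trace, and the
remaining traces are real because they are traces of products of Hermitian matrices.
-/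

variable {d : ℕ} {ι : Type} [Fintype ι]

noncomputable def spectralSum (g : Fin d → ℂ) (v : Fin d → Fin d → ℂ) :
    Matrix (Fin d) (Fin d) ℂ :=
  ∑ i, g i • ketbra (v i) (v i)

lemma projLog_eq_spectralSum (s : Fin d → ℝ) (v : Fin d → Fin d → ℂ) :
    projLog s v = spectralSum (fun i => (Real.log (s i) : ℂ)) v := rfl

lemma ketbra_mul_ketbra (u v x y : Fin d → ℂ) :
    ketbra u v * ketbra x y = (star v ⬝ᵥ x) • ketbra u y := by
  rw [ketbra, ketbra, vecMulVec_mul_vecMulVec, vecMulVec_smul]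
  rfl

lemma braket_self_eq_trace (v : Fin d → ℂ) (M : Matrix (Fin d) (Fin d) ℂ) :
    braket v M v = (M * ketbra v v).trace := by
  rw [ketbra, mul_vecMulVec, trace_vecMulVec, braket, dotProduct_comm]

lemma IsONB.sum_ketbra_eq_one {e : Fin d → Fin d → ℂ} (he : IsONB e) :
    ∑ i, ketbra (e i) (e i) = 1 := by
  let U : Matrix (Fin d) (Fin d) ℂ := Matrix.of e
  have hU : U * Uᴴ = 1 := by
    ext i j
    simpa [U, mul_apply, dotProduct, one_apply, mul_comm, eq_comm] using he j i
  have hU' : Uᴴ * U = 1 := mul_eq_one_comm.mp hU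
  ext a b
  simpa [U, ketbra, mul_apply, Matrix.sum_apply, vecMulVec_apply, one_apply, mul_comm, eq_comm]
    using congr_fun₂ hU' b a

lemma spectralSum_one {e : Fin d → Fin d → ℂ} (he : IsONB e) : spectralSum 1 e = 1 := by
  simp [spectralSum, he.sum_ketbra_eq_one]

lemma spectralSum_zero (v : Fin d → Fin d → ℂ) : spectralSum (fun _ => 0) v = 0 := by
  simp only [spectralSum, zero_smul, Finset.sum_const_zero]

lemma spectralSum_const_mul (c : ℂ) (g : Fin d → ℂ) (v : Fin d → Fin d → ℂ) :
    spectralSum (fun i => c * g i) v = c • spectralSum g v := by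
  simp only [spectralSum, Finset.smul_sum, smul_smul]

lemma spectralSum_mul_spectralSum {v : Fin d → Fin d → ℂ} (hv : IsONB v) (g h : Fin d → ℂ) :
    spectralSum g v * spectralSum h v = spectralSum (fun i => g i * h i) v := by
  simp [spectralSum, Finset.sum_mul, Finset.mul_sum, ketbra_mul_ketbra, hv _ _, smul_smul,
    mul_comm]

lemma isHermitian_spectralSum (g : Fin d → ℝ) (v : Fin d → Fin d → ℂ) :
    (spectralSum (fun i => (g i : ℂ)) v).IsHermitian := by
  simp [spectralSum, IsHermitian, conjTranspose_sum, conjTranspose_smul, ketbra,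
    conjTranspose_vecMulVec]

lemma isHermitian_projLog (s : Fin d → ℝ) (v : Fin d → Fin d → ℂ) :
    (projLog s v).IsHermitian :=
  isHermitian_spectralSum (fun i => Real.log (s i)) v

lemma Matrix.IsHermitian.ofReal_re_trace_mul {n : Type*} [Fintype n] {A B : Matrix n n ℂ}
    (hA : A.IsHermitian) (hB : B.IsHermitian) :
    (((A * B).trace.re : ℝ) : ℂ) = (A * B).trace := by
  rw [← Complex.conj_eq_iff_re, ← Complex.star_def, ← trace_conjTranspose, conjTranspose_mul,
    hA.eq, hB.eq, trace_mul_comm]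

lemma krausMap_sum {κ : Type*} (K : ι → Matrix (Fin d) (Fin d) ℂ) (s : Finset κ)
    (X : κ → Matrix (Fin d) (Fin d) ℂ) :
    krausMap K (∑ t ∈ s, X t) = ∑ t ∈ s, krausMap K (X t) := by
  simp only [krausMap, Finset.mul_sum, Finset.sum_mul]
  exact Finset.sum_comm

lemma krausMap_smul (K : ι → Matrix (Fin d) (Fin d) ℂ) (c : ℂ)
    (X : Matrix (Fin d) (Fin d) ℂ) :
    krausMap K (c • X) = c • krausMap K X := by
  simp only [krausMap, Finset.smul_sum, smul_mul_assoc, mul_smul_comm]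

lemma trace_krausMap (K : ι → Matrix (Fin d) (Fin d) ℂ) (hK : ∑ m, (K m)ᴴ * K m = 1)
    (X : Matrix (Fin d) (Fin d) ℂ) : (krausMap K X).trace = X.trace := by
  simp only [krausMap, trace_sum, trace_mul_cycle (K _)]
  rw [← trace_sum, ← Finset.sum_mul, hK, one_mul]

theorem sum_tpmP_mul_prod (K : ι → Matrix (Fin d) (Fin d) ℂ) (p : Fin d → ℝ)
    (ψ φ e f : Fin d → Fin d → ℂ) (w x y z a b : Fin d → ℂ) :
    ∑ μ, ∑ ν, ∑ i, ∑ j, ∑ k, ∑ l,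
        tpmP K p ψ φ e f μ ν i j k l * (w μ * x ν * y i * z j * a k * b l) =
      (spectralSum a f * krausMap K (spectralSum y e *
          spectralSum (fun μ => p μ * w μ) ψ * spectralSum z e) *
        spectralSum b f * spectralSum x φ).trace := by
  simp only [spectralSum, tpmP, braket_self_eq_trace, Finset.sum_mul, Finset.mul_sum,
    smul_mul_assoc, mul_smul_comm, krausMap_sum, krausMap_smul, trace_sum, trace_smul,
    smul_eq_mul]
  -- expanding the right side produces the indices in the order `ν l j μ i k`
  simp only [← Fintype.sum_prod_type']
  refine Fintype.sum_equiv
    { toFun := fun ⟨μ, ν, i, j, k, l⟩ => (ν, l, j, μ, i, k)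
      invFun := fun ⟨ν, l, j, μ, i, k⟩ => (μ, ν, i, j, k, l)
      left_inv := fun _ => rfl
      right_inv := fun _ => rfl } _ _ fun _ => ?_
  dsimp only [Equiv.coe_fn_mk]
  ring

theorem sum_tpmP_mul_of_additive (K : ι → Matrix (Fin d) (Fin d) ℂ)
    (hK : ∑ m, (K m)ᴴ * K m = 1) {p : Fin d → ℝ} {ψ φ e f : Fin d → Fin d → ℂ} (hψ : IsONB ψ)
    (hφ : IsONB φ) (he : IsONB e) (hf : IsONB f) {ρ : Matrix (Fin d) (Fin d) ℂ}
    (hρ : ρ = spectralSum (fun μ => (p μ : ℂ)) ψ)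
    {g : Fin d → Fin d → Fin d → Fin d → Fin d → Fin d → ℂ} {w x y z a b : Fin d → ℂ}
    (hg : ∀ μ ν i j k l, g μ ν i j k l = w μ + x ν + y i + z j + a k + b l) :
    ∑ μ, ∑ ν, ∑ i, ∑ j, ∑ k, ∑ l, tpmP K p ψ φ e f μ ν i j k l * g μ ν i j k l =
      (ρ * spectralSum w ψ).trace + (krausMap K ρ * spectralSum x φ).trace +
        (spectralSum y e * ρ).trace + (ρ * spectralSum z e).trace +
        (spectralSum a f * krausMap K ρ).trace + (krausMap K ρ * spectralSum b f).trace := by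
  have key := sum_tpmP_mul_prod K p ψ φ e f
  have hρ' : spectralSum (fun μ => (p μ : ℂ)) ψ = ρ := hρ.symm
  simp only [hg, mul_add, Finset.sum_add_distrib]
  congr 1; congr 1; congr 1; congr 1; congr 1
  · simpa [spectralSum_one, he, hf, hφ, trace_krausMap K hK, hρ, spectralSum_mul_spectralSum hψ]
      using key w 1 1 1 1 1
  · simpa [spectralSum_one, he, hf, hφ, trace_krausMap K hK, hρ'] using key 1 x 1 1 1 1
  · simpa [spectralSum_one, he, hf, hφ, trace_krausMap K hK, hρ'] using key 1 1 y 1 1 1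
  · simpa [spectralSum_one, he, hf, hφ, trace_krausMap K hK, hρ'] using key 1 1 1 z 1 1
  · simpa [spectralSum_one, he, hf, hφ, trace_krausMap K hK, hρ'] using key 1 1 1 1 a 1
  · simpa [spectralSum_one, he, hf, hφ, trace_krausMap K hK, hρ'] using key 1 1 1 1 1 b

lemma entProdFwd_eq_add {p p' r r' : Fin d → ℝ} (hr : ∀ i, r i ≠ 0) (hr' : ∀ k, r' k ≠ 0)
    (μ ν i j k l : Fin d) :
    entProdFwd p p' r r' μ ν i j k l =
      Real.log (p μ) + -1 * Real.log (p' ν) + -((1 + Complex.I) / 2) * Real.log (r i) +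
        -((1 - Complex.I) / 2) * Real.log (r j) + (1 + Complex.I) / 2 * Real.log (r' k) +
        (1 - Complex.I) / 2 * Real.log (r' l) := by
  rw [entProdFwd, Real.log_div (mul_ne_zero (hr i) (hr j)) (mul_ne_zero (hr' k) (hr' l)),
    Real.log_mul (hr i) (hr j), Real.log_mul (hr' k) (hr' l), Real.log_div (hr i) (hr j),
    Real.log_div (hr' k) (hr' l)]
  push_cast
  ring

theorem mean_entropy_production_eq_relative_entropy_difference_general
    {d : ℕ} {ι : Type} [Fintype ι] (K : ι → Matrix (Fin d) (Fin d) ℂ)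
    (hK : ∑ m, (K m)ᴴ * K m = 1)
    (r : Fin d → ℝ) (e : Fin d → Fin d → ℂ) (hr : ∀ i, 0 < r i) (he : IsONB e)
    (r' : Fin d → ℝ) (f : Fin d → Fin d → ℂ) (hr' : ∀ k, 0 < r' k) (hf : IsONB f)
    (ρ : Matrix (Fin d) (Fin d) ℂ)
    (p : Fin d → ℝ) (ψ : Fin d → Fin d → ℂ) (hψ : IsONB ψ)
    (hρ : ρ = ∑ μ, ((p μ : ℂ)) • ketbra (ψ μ) (ψ μ))
    (p' : Fin d → ℝ) (φ : Fin d → Fin d → ℂ) (hφ : IsONB φ)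
    (hNρ : krausMap K ρ = ∑ ν, ((p' ν : ℂ)) • ketbra (φ ν) (φ ν)) :
    (∑ μ, ∑ ν, ∑ i, ∑ j, ∑ k, ∑ l,
      tpmP K p ψ φ e f μ ν i j k l * entProdFwd p p' r r' μ ν i j k l) =
      ((((ρ * (projLog p ψ - projLog r e)).trace.re -
          ((krausMap K ρ) * (projLog p' φ - projLog r' f)).trace.re : ℝ)) : ℂ) ∧
    (∑ μ, ∑ ν, ∑ i, ∑ j, ∑ k, ∑ l,
      tpmP K p ψ φ e f μ ν i j k l *
        (((-(1/2) * (Real.log (r i / r j) - Real.log (r' k / r' l)) : ℝ)) : ℂ)) = 0 := by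
  have hρH : ρ.IsHermitian := hρ ▸ isHermitian_spectralSum p ψ
  have hNρH : (krausMap K ρ).IsHermitian := hNρ ▸ isHermitian_spectralSum p' φ
  rw [Complex.ofReal_sub,
    hρH.ofReal_re_trace_mul ((isHermitian_projLog p ψ).sub (isHermitian_projLog r e)),
    hNρH.ofReal_re_trace_mul ((isHermitian_projLog p' φ).sub (isHermitian_projLog r' f))]
  simp only [projLog_eq_spectralSum]
  constructor
  · rw [sum_tpmP_mul_of_additive K hK hψ hφ he hf hρ
      (entProdFwd_eq_add (fun i => (hr i).ne') (fun k => (hr' k).ne'))]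
    simp only [spectralSum_const_mul, mul_smul_comm, smul_mul_assoc, trace_smul, smul_eq_mul,
      mul_sub, trace_sub, trace_mul_comm (spectralSum _ e) ρ,
      trace_mul_comm (spectralSum _ f) (krausMap K ρ)]
    ring
  · rw [sum_tpmP_mul_of_additive K hK hψ hφ he hf hρ (w := fun _ => 0) (x := fun _ => 0)
      (y := fun i => -(1 / 2) * Real.log (r i)) (z := fun j => 1 / 2 * Real.log (r j))
      (a := fun k => 1 / 2 * Real.log (r' k))
      (b := fun l => -(1 / 2) * Real.log (r' l)) fun _ _ i j k l => by
        rw [Real.log_div (hr i).ne' (hr j).ne', Real.log_div (hr' k).ne' (hr' l).ne']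
        push_cast
        ring]
    simp only [spectralSum_zero, mul_zero, trace_zero, spectralSum_const_mul, mul_smul_comm,
      smul_mul_assoc, trace_smul, smul_eq_mul, trace_mul_comm (spectralSum _ e) ρ,
      trace_mul_comm (spectralSum _ f) (krausMap K ρ)]
    ring

/-- the first moment of the entropy production equals the quantum relative
entropy difference S(ρ‖γ) − S(N(ρ)‖N(γ)), and the mean imaginary entropy production
vanishes. -/
theorem mean_entropy_production_eq_relative_entropy_difference
    {d : ℕ} {ι : Type} [Fintype ι] (K : ι → Matrix (Fin d) (Fin d) ℂ)
    (hK : ∑ m, (K m)ᴴ * K m = 1)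
    (γ : Matrix (Fin d) (Fin d) ℂ)
    (r : Fin d → ℝ) (e : Fin d → Fin d → ℂ) (hr : ∀ i, 0 < r i) (he : IsONB e)
    (hrtr : ∑ i, r i = 1)
    (hγ : γ = ∑ i, ((r i : ℂ)) • ketbra (e i) (e i))
    (r' : Fin d → ℝ) (f : Fin d → Fin d → ℂ) (hr' : ∀ k, 0 < r' k) (hf : IsONB f)
    (hNγ : krausMap K γ = ∑ k, ((r' k : ℂ)) • ketbra (f k) (f k))
    (ρ : Matrix (Fin d) (Fin d) ℂ)
    (p : Fin d → ℝ) (ψ : Fin d → Fin d → ℂ) (hp : ∀ μ, 0 < p μ) (hψ : IsONB ψ)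
    (hρ : ρ = ∑ μ, ((p μ : ℂ)) • ketbra (ψ μ) (ψ μ))
    (p' : Fin d → ℝ) (φ : Fin d → Fin d → ℂ) (hp' : ∀ ν, 0 < p' ν) (hφ : IsONB φ)
    (hNρ : krausMap K ρ = ∑ ν, ((p' ν : ℂ)) • ketbra (φ ν) (φ ν)) :
    (∑ μ, ∑ ν, ∑ i, ∑ j, ∑ k, ∑ l,
      tpmP K p ψ φ e f μ ν i j k l * entProdFwd p p' r r' μ ν i j k l) =
      ((((ρ * (projLog p ψ - projLog r e)).trace.re -
          ((krausMap K ρ) * (projLog p' φ - projLog r' f)).trace.re : ℝ)) : ℂ) ∧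
    (∑ μ, ∑ ν, ∑ i, ∑ j, ∑ k, ∑ l,
      tpmP K p ψ φ e f μ ν i j k l *
        (((-(1/2) * (Real.log (r i / r j) - Real.log (r' k / r' l)) : ℝ)) : ℂ)) = 0 :=
  mean_entropy_production_eq_relative_entropy_difference_general K hK r e hr he r' f hr' hf ρ p ψ hψ
    hρ p' φ hφ hNρ
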